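/- For any natural number a ≥ 1 and real function f integrable on (s1,s2), the a-th power of ∫_{s1}^{s2} f(p) dp equals a! times the integral of ∏_{i=1}^a f(p_i) over the ordered simplex s1 < p_1 < ... < p_a < s2. -/

import Mathlib

open MeasureTheory Real

/-- The open ordered simplex `s₁ < p 0 < p 1 < ⋯ < s₂` in `Fin a → ℝ`. -/
def orderedSimplex (a : ℕ) (s₁ s₂ : ℝ) : Set (Fin a → ℝ) :=
  {p | StrictMono p ∧ ∀ i, p i ∈ Set.Ioo s₁ s₂}

lemma measurableSet_strictMono (a : ℕ) :
    MeasurableSet {p : Fin a → ℝ | StrictMono p} := by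
  have : {p : Fin a → ℝ | StrictMono p}
      = ⋂ (i) (j) (_ : i < j), {p : Fin a → ℝ | p i < p j} := by
    ext p
    simp only [Set.mem_setOf_eq, Set.mem_iInter, StrictMono]
  rw [this]
  exact MeasurableSet.iInter fun i => MeasurableSet.iInter fun j =>
    MeasurableSet.iInter fun _ =>
      measurableSet_lt (measurable_pi_apply i) (measurable_pi_apply j)

lemma perm_eq_of_strictMono {a : ℕ} {p : Fin a → ℝ} {σ τ : Equiv.Perm (Fin a)}
    (hσ : StrictMono (p ∘ σ)) (hτ : StrictMono (p ∘ τ)) : σ = τ := by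
  have hπ : StrictMono (fun x => τ.symm (σ x)) := by
    intro i j hij
    have h1 : p (τ (τ.symm (σ i))) < p (τ (τ.symm (σ j))) := by
      simpa using hσ hij
    exact (hτ.lt_iff_lt).1 h1
  have hrange : Set.range (fun x => τ.symm (σ x)) = Set.range (id : Fin a → Fin a) := by
    rw [Set.range_id]
    exact (σ.trans τ.symm).range_eq_univ
  have hwf : WellFoundedLT (Fin a) := inferInstance
  have heq := (StrictMono.range_inj hπ (strictMono_id : StrictMono (id : Fin a → Fin a))).1 hrange
  ext x
  have hx := congrFun heq x
  simp only [id] at hx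
  exact congrArg Fin.val ((Equiv.symm_apply_eq τ).1 hx)

lemma nonInjective_null (a : ℕ) :
    (volume : Measure (Fin a → ℝ)) {p : Fin a → ℝ | ¬ Function.Injective p} = 0 := by
  have hsub : {p : Fin a → ℝ | ¬ Function.Injective p}
      ⊆ ⋃ (i) (j) (_ : i ≠ j), {p : Fin a → ℝ | p i = p j} := by
    intro p hp
    simp only [Set.mem_setOf_eq, Function.Injective, not_forall] at hp
    obtain ⟨i, j, hij, hne⟩ := hp
    exact Set.mem_iUnion.2 ⟨i, Set.mem_iUnion.2 ⟨j, Set.mem_iUnion.2 ⟨hne, hij⟩⟩⟩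
  refine measure_mono_null hsub ?_
  refine measure_iUnion_null fun i => measure_iUnion_null fun j =>
    measure_iUnion_null fun hij => ?_
  have hker : {p : Fin a → ℝ | p i = p j}
      = (LinearMap.ker ((LinearMap.proj i : (Fin a → ℝ) →ₗ[ℝ] ℝ) - LinearMap.proj j) :
          Submodule ℝ (Fin a → ℝ)) := by
    ext p
    simp [LinearMap.mem_ker, sub_eq_zero]
  rw [hker]
  refine Measure.addHaar_submodule _ _ ?_
  intro htop
  have h1 : (fun k => if k = i then (1 : ℝ) else 0) ∈
      LinearMap.ker ((LinearMap.proj i : (Fin a → ℝ) →ₗ[ℝ] ℝ) - LinearMap.proj j) := by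
    rw [htop]; trivial
  simp [LinearMap.mem_ker, sub_eq_zero, if_neg (Ne.symm hij)] at h1

theorem integral_pow_eq_factorial_mul_simplex_integral
    (a : ℕ) (ha : 1 ≤ a) (s₁ s₂ : ℝ) (hs : s₁ < s₂)
    (f : ℝ → ℝ) (hf : IntegrableOn f (Set.Ioo s₁ s₂)) :
    (∫ p in Set.Ioo s₁ s₂, f p) ^ a =
      (a.factorial : ℝ) *
        ∫ p in orderedSimplex a s₁ s₂, ∏ i, f (p i) := by
  classical
  set I : Set ℝ := Set.Ioo s₁ s₂ with hI
  set g : ℝ → ℝ := I.indicator f with hg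
  have hgint : Integrable g := hf.integrable_indicator measurableSet_Ioo
  set G : (Fin a → ℝ) → ℝ := fun p => ∏ i, g (p i) with hG
  have hGint : Integrable G := Integrable.fintype_prod (f := fun _ : Fin a => g) fun _ => hgint
  set M : Equiv.Perm (Fin a) → Set (Fin a → ℝ) :=
    fun σ => {p | StrictMono (p ∘ σ)} with hM
  have hMmeas : ∀ σ, MeasurableSet (M σ) := fun σ =>
    (measurable_pi_lambda (fun p : Fin a → ℝ => p ∘ σ) fun i => measurable_pi_apply (σ i))
      (measurableSet_strictMono a)
  have hMdisj : Pairwise (Function.onFun Disjoint M) := by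
    intro σ τ hστ
    rw [Function.onFun, Set.disjoint_left]
    intro p hpσ hpτ
    exact hστ (perm_eq_of_strictMono hpσ hpτ)
  -- each piece integrates to the same thing
  have hpiece : ∀ σ : Equiv.Perm (Fin a), ∫ p in M σ, G p = ∫ p in M 1, G p := by
    intro σ
    set T := MeasurableEquiv.piCongrLeft (fun _ : Fin a => ℝ) σ.symm with hT
    have hTapp : ∀ p : Fin a → ℝ, T p = p ∘ σ := by
      intro p
      funext j
      have h1 : T p (σ.symm (σ j)) = p (σ j) :=
        MeasurableEquiv.piCongrLeft_apply_apply (β := fun _ : Fin a => ℝ) σ.symm p (σ j)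
      simpa using h1
    have hmp : MeasurePreserving T volume volume :=
      MeasureTheory.volume_measurePreserving_piCongrLeft (fun _ : Fin a => ℝ) σ.symm
    have hpre : T ⁻¹' (M 1) = M σ := by
      ext p
      simp only [Set.mem_preimage, hM, Set.mem_setOf_eq, hTapp p]
      constructor
      · intro h; simpa using h
      · intro h; simpa using h
    have key := hmp.setIntegral_preimage_emb T.measurableEmbedding G (M 1)
    rw [hpre] at key
    rw [← key]
    refine setIntegral_congr_fun (hMmeas σ) fun p _ => ?_
    simp only [hG, hTapp p, Function.comp]
    exact (Equiv.prod_comp σ fun i => g (p i)).symm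
  -- full integral = sum over pieces
  have hcover : (⋃ σ : Equiv.Perm (Fin a), M σ)ᶜ ⊆
      {p : Fin a → ℝ | ¬ Function.Injective p} := by
    intro p hp
    simp only [Set.mem_compl_iff, Set.mem_iUnion, not_exists] at hp
    intro hinj
    refine hp (Tuple.sort p) ?_
    exact (Tuple.monotone_sort p).strictMono_of_injective
      (hinj.comp (Tuple.sort p).injective)
  have huniv : (⋃ σ : Equiv.Perm (Fin a), M σ) =ᵐ[volume] (Set.univ : Set (Fin a → ℝ)) :=
    MeasureTheory.ae_eq_univ.2 (measure_mono_null hcover (nonInjective_null a))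
  have hsplit : ∫ p, G p = ∑ σ : Equiv.Perm (Fin a), ∫ p in M σ, G p := by
    rw [← setIntegral_univ (μ := volume) (f := G), ← setIntegral_congr_set huniv]
    exact integral_iUnion_fintype hMmeas hMdisj fun σ => hGint.integrableOn
  -- compute left side
  have hcube : MeasurableSet (Set.univ.pi fun _ : Fin a => I) :=
    MeasurableSet.univ_pi fun _ => measurableSet_Ioo
  have hGind : ∀ p : Fin a → ℝ,
      G p = (Set.univ.pi fun _ : Fin a => I).indicator (fun q => ∏ i, f (q i)) p := by
    intro p
    rw [Set.indicator_apply]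
    split_ifs with h
    · refine Finset.prod_congr rfl fun i _ => ?_
      exact Set.indicator_of_mem (h i (Set.mem_univ i)) f
    · simp only [Set.mem_pi, Set.mem_univ, forall_true_left, not_forall] at h
      obtain ⟨i, hi⟩ := h
      refine Finset.prod_eq_zero (Finset.mem_univ i) ?_
      exact Set.indicator_of_notMem hi f
  have hMone : M 1 ∩ (Set.univ.pi fun _ : Fin a => I) = orderedSimplex a s₁ s₂ := by
    ext p
    simp only [hM, Set.mem_inter_iff, Set.mem_setOf_eq, Set.mem_pi, Set.mem_univ,
      forall_true_left, orderedSimplex, hI]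
    constructor
    · rintro ⟨h1, h2⟩; exact ⟨by simpa using h1, h2⟩
    · rintro ⟨h1, h2⟩; exact ⟨by simpa using h1, h2⟩
  have hlast : ∫ p in M 1, G p = ∫ p in orderedSimplex a s₁ s₂, ∏ i, f (p i) := by
    rw [show (fun p => G p) = (Set.univ.pi fun _ : Fin a => I).indicator
        (fun q => ∏ i, f (q i)) from funext hGind]
    rw [setIntegral_indicator hcube, hMone]
  calc (∫ p in I, f p) ^ a = (∫ x, g x) ^ a := by
        rw [hg, integral_indicator measurableSet_Ioo]
    _ = ∫ p : Fin a → ℝ, G p := by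
        have := MeasureTheory.integral_fintype_prod_eq_pow (ι := Fin a) g (μ := volume)
        rw [Fintype.card_fin] at this
        exact this.symm
    _ = ∑ σ : Equiv.Perm (Fin a), ∫ p in M σ, G p := hsplit
    _ = (a.factorial : ℝ) * ∫ p in M 1, G p := by
        rw [Finset.sum_congr rfl fun σ _ => hpiece σ, Finset.sum_const, Finset.card_univ,
          Fintype.card_perm, Fintype.card_fin, nsmul_eq_mul]
    _ = (a.factorial : ℝ) * ∫ p in orderedSimplex a s₁ s₂, ∏ i, f (p i) := by
        rw [hlast]
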